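/- arXiv:1512.03723 — 2 statements merged into one kernel-verified Lean document; each statement's English description precedes it below -/
import Mathlib

section
/- Monopoly states: fix a ∈ ZMod n and let M be the monopoly state with M a = n and M i = 0 for i ≠ a, and suppose f^[k] M is periodic for some k. Then there exists m with f^[m] M i = 1 for all i ∈ ZMod n if and only if n is odd. -/
/-- The sharing map of the candy sharing game: each child with at least 2 candies
passes one candy to each neighbour. -/
def shareMap (n : ℕ) (S : ZMod n → ℕ) : ZMod n → ℕ := fun i =>
  (if 2 ≤ S i then S i - 2 else S i)
    + (if 2 ≤ S (i - 1) then 1 else 0)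
    + (if 2 ≤ S (i + 1) then 1 else 0)

/-- A state is periodic if some positive iterate of the sharing map fixes it. -/
def IsPeriodicState (n : ℕ) (S : ZMod n → ℕ) : Prop :=
  ∃ k : ℕ, 1 ≤ k ∧ (shareMap n)^[k] S = S

/-- A state is balanced if the total number of candies equals the number of children. -/
def IsBalanced (n : ℕ) [NeZero n] (S : ZMod n → ℕ) : Prop :=
  ∑ i : ZMod n, S i = n

/-- A clockwise wave state: starting from some position, the circular list of values
is a concatenation of blocks, each equal to [0,2] or [1]. -/
def IsClockwiseWave (n : ℕ) (S : ZMod n → ℕ) : Prop :=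
  ∃ (a : ZMod n) (L : List (List ℕ)),
    (∀ b ∈ L, b = [0, 2] ∨ b = [1]) ∧
    L.flatten = (List.range n).map fun j => S (a + (j : ZMod n))

/-- An anticlockwise wave state: starting from some position, the circular list of values
is a concatenation of blocks, each equal to [2,0] or [1]. -/
def IsAnticlockwiseWave (n : ℕ) (S : ZMod n → ℕ) : Prop :=
  ∃ (a : ZMod n) (L : List (List ℕ)),
    (∀ b ∈ L, b = [2, 0] ∨ b = [1]) ∧
    L.flatten = (List.range n).map fun j => S (a + (j : ZMod n))

/-- The state obtained when child `j` alone shares (assuming `2 ≤ S j`). -/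
def shareAt (n : ℕ) (j : ZMod n) (S : ZMod n → ℕ) : ZMod n → ℕ := fun i =>
  if i = j then S j - 2
  else if i = j - 1 then S (j - 1) + 1
  else if i = j + 1 then S (j + 1) + 1
  else S i

/-- The index of a state: the sum over all arcs (of length 1 to n) of their
deficiencies, where the deficiency of an arc of length k is max(0, k - (sum of the arc)). -/
def stateIndex (n : ℕ) [NeZero n] (S : ZMod n → ℕ) : ℕ :=
  ∑ i : ZMod n, ∑ k ∈ Finset.Icc 1 n, (k - ∑ j ∈ Finset.range k, S (i + (j : ZMod n)))

/-- The invariant τ of a state. -/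
def tauInv (n : ℕ) [NeZero n] (S : ZMod n → ℕ) : ZMod n :=
  (if Even n then ((n / 2 : ℕ) : ZMod n) else 0)
    + ∑ i : ZMod n, (i.val : ZMod n) * (S i : ZMod n)

/-!
Sharing preserves the total and the moment `∑ v, v * S v` in `ZMod n`. A monopoly has moment
`0`, while for even `n` the all-ones state has moment `n / 2`; so even `n` never equalises.

For odd `n`, a monopoly at `a` is symmetric about the edge opposite `a`, and so is every state
of its orbit. In a periodic orbit the firing counts over one period are discrete harmonic on the
cycle, hence constant, so it suffices to find one child that does not fire during a whole period.
For this, record a balanced state by its height function `H v = ∑_{j ≤ v} (S j - 1)`. One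
sharing step changes `H` by local terms plus a global shift, so `max H - min H` never grows and
is constant on a periodic orbit; then a maximum of `H` can be followed through time: it stays
put, or moves back one step when it fires. The symmetry sends maxima of `H` to minima, so unless
`H` is flat (all ones) the followed maximum never reaches the centre of the reflection. It can
therefore fire only finitely often, and afterwards it sits at a child that never fires.
-/

open Finset Function

section Dynamics

variable {α β : Type*} [PartialOrder β] {f : α → α} {x : α} {p : ℕ}

theorem Function.IsPeriodicPt.eq_of_antitone (hp : 0 < p) (hx : IsPeriodicPt f p x) (φ : α → β)
    (hφ : ∀ m, φ (f^[m + 1] x) ≤ φ (f^[m] x)) (m : ℕ) : φ (f^[m] x) = φ x := by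
  have anti : Antitone fun m => φ (f^[m] x) := antitone_nat_of_succ_le hφ
  refine le_antisymm (anti (Nat.zero_le m)) ?_
  calc φ x = φ (f^[p * m] x) := by rw [(hx.mul_const m).eq]
    _ ≤ φ (f^[m] x) := anti (Nat.le_mul_of_pos_left m hp)

end Dynamics

variable {n : ℕ}

theorem ZMod.eq_of_periodic_one [NeZero n] {γ : Type*} {g : ZMod n → γ} (h : Periodic g 1)
    (v w : ZMod n) : g v = g w := by
  have key : ∀ j : ℕ, g j = g 0 := by
    intro j
    induction j with
    | zero => simp
    | succ j ih => rw [Nat.cast_succ, h, ih]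
  rw [← ZMod.natCast_zmod_val v, ← ZMod.natCast_zmod_val w, key, key]

theorem ZMod.sum_range_natCast [NeZero n] {M : Type*} [AddCommMonoid M] (g : ZMod n → M) :
    ∑ j ∈ range n, g j = ∑ v, g v := by
  rw [← Fin.sum_univ_eq_sum_range (fun j => g j)]
  exact Fintype.sum_equiv (ZMod.finEquiv n).toEquiv _ _ fun i => by
    obtain ⟨m, rfl⟩ : ∃ m, n = m + 1 := Nat.exists_eq_succ_of_ne_zero (NeZero.ne n)
    exact congrArg g (Fin.cast_val_eq_self i)

theorem ZMod.val_sub_one_add_one [NeZero n] {w : ZMod n} (hw : w ≠ 0) :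
    (w - 1).val + 1 = w.val := by
  have hpos := ZMod.val_pos.mpr hw
  have hw' : w - 1 = ((w.val - 1 : ℕ) : ZMod n) := by
    rw [Nat.cast_sub hpos, ZMod.natCast_zmod_val, Nat.cast_one]
  rw [hw', ZMod.val_cast_of_lt (by have := ZMod.val_lt w; omega)]
  omega

theorem ZMod.eq_of_two_mul_eq_add [NeZero n] {g : ZMod n → ℤ}
    (h : ∀ v, 2 * g v = g (v - 1) + g (v + 1)) (v w : ZMod n) : g v = g w := by
  have hstep : ∀ v, g (v + 1 + 1) - g (v + 1) = g (v + 1) - g v := fun v => by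
    have := h (v + 1)
    rw [add_sub_cancel_right] at this
    linarith
  have hconst := ZMod.eq_of_periodic_one (g := fun v => g (v + 1) - g v) hstep
  have hsum : ∑ v, (g (v + 1) - g v) = 0 := by
    rw [sum_sub_distrib, Fintype.sum_equiv (Equiv.addRight 1) (fun v => g (v + 1)) g fun _ => rfl,
      sub_self]
  rw [sum_congr rfl fun v _ => hconst v 0, sum_const, card_univ, ZMod.card, nsmul_eq_mul] at hsum
  have h0 : g (0 + 1) - g 0 = 0 :=
    (mul_eq_zero.mp hsum).resolve_left (by exact_mod_cast NeZero.ne n)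
  exact ZMod.eq_of_periodic_one (fun v => by linarith [hconst v 0]) v w

theorem ZMod.sum_univ_ne_zero_of_even [NeZero n] (h : Even n) : ∑ v : ZMod n, v ≠ 0 := by
  intro h0
  rw [← ZMod.sum_range_natCast (fun v => v), ← Nat.cast_sum, ZMod.natCast_eq_zero_iff] at h0
  obtain ⟨c, hc⟩ := h0
  obtain ⟨l, rfl⟩ := h
  have hl : 0 < l + l := Nat.pos_of_ne_zero (NeZero.ne _)
  have hgauss := sum_range_id_mul_two (l + l)
  rw [hc, mul_assoc] at hgauss
  have := Nat.eq_of_mul_eq_mul_left hl hgauss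
  omega

namespace CandySharing

def fires (S : ZMod n → ℕ) (v : ZMod n) : ℤ := if 2 ≤ S v then 1 else 0

theorem fires_of_le {S : ZMod n → ℕ} {v : ZMod n} (h : 2 ≤ S v) : fires S v = 1 := if_pos h

theorem fires_eq_zero_iff {S : ZMod n → ℕ} {v : ZMod n} : fires S v = 0 ↔ S v < 2 := by
  unfold fires; split_ifs <;> simp <;> omega

theorem fires_nonneg (S : ZMod n → ℕ) (v : ZMod n) : 0 ≤ fires S v := by
  unfold fires; split <;> norm_num

theorem cast_shareMap_apply (S : ZMod n → ℕ) (v : ZMod n) :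
    (shareMap n S v : ℤ) = S v - 2 * fires S v + fires S (v - 1) + fires S (v + 1) := by
  unfold shareMap fires
  split_ifs <;> push_cast <;> omega

theorem shareMap_reflect (S : ZMod n → ℕ) (b : ZMod n) :
    shareMap n (fun v => S (b - v)) = fun v => shareMap n S (b - v) := by
  funext v
  simp only [shareMap, sub_sub, sub_add]
  ring_nf

theorem sum_mul_shareMap [NeZero n] {R : Type*} [CommRing R] (g : ZMod n → R)
    (hg : ∀ v, g (v - 1) + g (v + 1) = 2 * g v) (S : ZMod n → ℕ) :
    ∑ v, g v * shareMap n S v = ∑ v, g v * S v := by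
  have shift (c : ZMod n) : ∑ v, g v * (fires S (v + c) : R) = ∑ v, g (v - c) * fires S v :=
    Fintype.sum_equiv (Equiv.addRight c) _ _ fun v => by simp
  have hcast (v : ZMod n) : (shareMap n S v : R) = ((shareMap n S v : ℤ) : R) := by norm_cast
  simp only [hcast, cast_shareMap_apply]
  push_cast
  have hm := shift (-1)
  have hp := shift 1
  simp only [sub_neg_eq_add, ← sub_eq_add_neg] at hm
  simp only [mul_add, mul_sub, sum_add_distrib, sum_sub_distrib, hm, hp]
  have hsum : ∑ v, g (v + 1) * (fires S v : R) + ∑ v, g (v - 1) * (fires S v : R)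
      = ∑ v, g v * (2 * (fires S v : R)) := by
    rw [← sum_add_distrib]
    refine sum_congr rfl fun v _ => ?_
    rw [← add_mul, add_comm, hg]; ring
  rw [add_assoc, hsum, sub_add_cancel]

section Invariants

variable [NeZero n]

theorem sum_shareMap (S : ZMod n → ℕ) : ∑ v, shareMap n S v = ∑ v, S v := by
  have h := sum_mul_shareMap (R := ℤ) (fun _ => 1) (fun _ => by norm_num) S
  simp only [one_mul] at h
  exact_mod_cast h

theorem _root_.IsBalanced.iterate {S : ZMod n → ℕ} (hS : IsBalanced n S) (m : ℕ) :
    IsBalanced n ((shareMap n)^[m] S) := by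
  induction m with
  | zero => exact hS
  | succ m ih => rw [iterate_succ_apply']; exact (sum_shareMap _).trans ih

def moment (S : ZMod n → ℕ) : ZMod n := ∑ v, v * S v

theorem moment_iterate (S : ZMod n → ℕ) (m : ℕ) : moment ((shareMap n)^[m] S) = moment S := by
  induction m with
  | zero => rfl
  | succ m ih =>
    rw [iterate_succ_apply', ← ih]
    exact sum_mul_shareMap id (fun v => by simp only [id]; ring) _

end Invariants

theorem iterate_shareMap_apply_sub {S : ZMod n → ℕ} {b : ZMod n} (hsym : ∀ v, S (b - v) = S v)
    (m : ℕ) (v : ZMod n) : (shareMap n)^[m] S (b - v) = (shareMap n)^[m] S v := by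
  have hcomm : Function.Commute (fun T : ZMod n → ℕ => fun v => T (b - v)) (shareMap n) :=
    fun T => (shareMap_reflect T b).symm
  have h := congrFun (hcomm.iterate_right m S) v
  rwa [show (fun v => S (b - v)) = S from funext hsym] at h

theorem shareMap_one : shareMap n (fun _ => 1) = fun _ => 1 := by
  funext v; simp [shareMap]

def nextMax (S : ZMod n → ℕ) (x : ZMod n) : ZMod n := if 2 ≤ S x then x - 1 else x

def prevMax (S : ZMod n → ℕ) (v : ZMod n) : ZMod n := if 2 ≤ S (v + 1) then v + 1 else v

theorem leftInvOn_nextMax_prevMax (S : ZMod n → ℕ) :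
    Set.LeftInvOn (nextMax S) (prevMax S) {v | S v < 2} := by
  intro v hv
  unfold prevMax
  split_ifs with h
  · simp [nextMax, h]
  · simp [nextMax, show ¬ 2 ≤ S v from not_le.mpr hv]

section Height

variable [NeZero n] {S : ZMod n → ℕ}

def height (S : ZMod n → ℕ) (v : ZMod n) : ℤ := ∑ j ∈ range (v.val + 1), ((S j : ℤ) - 1)

theorem height_sub_height_sub_one (hS : IsBalanced n S) (v : ZMod n) :
    height S v - height S (v - 1) = S v - 1 := by
  by_cases hv : v = 0
  · subst hv
    obtain ⟨m, rfl⟩ : ∃ m, n = m + 1 := Nat.exists_eq_succ_of_ne_zero (NeZero.ne n)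
    have hwrap : height S (0 - 1) = 0 := by
      rw [height, zero_sub, ZMod.val_neg_one, sum_sub_distrib,
        ZMod.sum_range_natCast (fun v => (S v : ℤ)), ← Nat.cast_sum, hS]
      simp
    rw [hwrap, height]
    simp
  · rw [height, height, ← ZMod.val_sub_one_add_one hv, sum_range_succ,
      ZMod.val_sub_one_add_one hv, ZMod.natCast_zmod_val]
    ring

theorem height_sub_one_lt (hS : IsBalanced n S) {v : ZMod n} (hv : 2 ≤ S v) :
    height S (v - 1) < height S v := by
  have := height_sub_height_sub_one hS v
  omega

def heightDrift (S : ZMod n → ℕ) : ℤ := fires S (-1) - fires S 0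

theorem height_shareMap (S : ZMod n → ℕ) (v : ZMod n) :
    height (shareMap n S) v = height S v - fires S v + fires S (v + 1) + heightDrift S := by
  have hstep (j : ℕ) : ((shareMap n S j : ℤ) - 1) - ((S j : ℤ) - 1)
      = (fires S ((j + 1 : ℕ) : ZMod n) - fires S ((j + 1 : ℕ) - 1 : ZMod n))
        - (fires S j - fires S (j - 1)) := by
    rw [cast_shareMap_apply, Nat.cast_succ, add_sub_cancel_right]
    ring
  have htel := sum_range_sub (fun j : ℕ => fires S j - fires S ((j : ZMod n) - 1)) (v.val + 1)
  rw [← sum_congr rfl fun j _ => hstep j, sum_sub_distrib] at htel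
  rw [heightDrift, ← sub_eq_zero, height, height]
  push_cast at htel
  rw [ZMod.natCast_zmod_val, add_sub_cancel_right] at htel
  simp only [zero_sub] at htel
  linarith

def heightMax (S : ZMod n → ℕ) : ℤ := univ.sup' univ_nonempty (height S)

def heightMin (S : ZMod n → ℕ) : ℤ := univ.inf' univ_nonempty (height S)

theorem height_le_heightMax (S : ZMod n → ℕ) (v : ZMod n) : height S v ≤ heightMax S :=
  le_sup' _ (mem_univ v)

theorem heightMin_le_height (S : ZMod n → ℕ) (v : ZMod n) : heightMin S ≤ height S v :=
  inf'_le _ (mem_univ v)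

theorem heightMax_shareMap_le (hS : IsBalanced n S) :
    heightMax (shareMap n S) ≤ heightMax S + heightDrift S := by
  refine sup'_le _ _ fun v _ => ?_
  rw [height_shareMap]
  have := fires_nonneg S v
  rcases lt_or_ge (S (v + 1)) 2 with h | h
  · have := height_le_heightMax S v
    rw [fires_eq_zero_iff.mpr h]; linarith
  · have := height_sub_one_lt hS h
    have := height_le_heightMax S (v + 1)
    rw [add_sub_cancel_right] at *
    rw [fires_of_le h]; linarith

theorem heightMin_shareMap_ge (hS : IsBalanced n S) :
    heightMin S + heightDrift S ≤ heightMin (shareMap n S) := by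
  refine le_inf' _ _ fun v _ => ?_
  rw [height_shareMap]
  have := fires_nonneg S (v + 1)
  rcases lt_or_ge (S v) 2 with h | h
  · have := heightMin_le_height S v
    rw [fires_eq_zero_iff.mpr h]; linarith
  · have := height_sub_one_lt hS h
    have := heightMin_le_height S (v - 1)
    rw [fires_of_le h]; linarith

def heightSpread (S : ZMod n → ℕ) : ℤ := heightMax S - heightMin S

theorem heightSpread_shareMap_le (hS : IsBalanced n S) :
    heightSpread (shareMap n S) ≤ heightSpread S := by
  have := heightMax_shareMap_le hS
  have := heightMin_shareMap_ge hS
  unfold heightSpread; linarith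

theorem eq_one_of_heightSpread_eq_zero (hS : IsBalanced n S) (h : heightSpread S = 0) (v : ZMod n) :
    S v = 1 := by
  have := height_sub_height_sub_one hS v
  have := height_le_heightMax S v
  have := heightMin_le_height S v
  have := height_le_heightMax S (v - 1)
  have := heightMin_le_height S (v - 1)
  unfold heightSpread at h
  omega

def heightArgmax (S : ZMod n → ℕ) : Finset (ZMod n) :=
  univ.filter fun v => height S v = heightMax S

theorem mem_heightArgmax {v : ZMod n} : v ∈ heightArgmax S ↔ height S v = heightMax S := by
  simp [heightArgmax]

theorem heightArgmax_nonempty (S : ZMod n → ℕ) : (heightArgmax S).Nonempty := by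
  obtain ⟨v, _, hv⟩ := exists_mem_eq_sup' univ_nonempty (height S)
  exact ⟨v, mem_heightArgmax.mpr hv.symm⟩

theorem lt_two_and_prevMax_mem (hS : IsBalanced n S)
    (hmax : heightMax (shareMap n S) = heightMax S + heightDrift S) {v : ZMod n}
    (hv : v ∈ heightArgmax (shareMap n S)) : S v < 2 ∧ prevMax S v ∈ heightArgmax S := by
  rw [mem_heightArgmax, hmax, height_shareMap] at hv
  have hlt := height_sub_one_lt hS (v := v + 1)
  rw [add_sub_cancel_right] at hlt
  have := height_le_heightMax S v
  have := height_le_heightMax S (v + 1)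
  simp only [prevMax, mem_heightArgmax]
  rcases lt_or_ge (S v) 2 with h | h <;> rcases lt_or_ge (S (v + 1)) 2 with h' | h'
  · simp only [fires_eq_zero_iff.mpr h, fires_eq_zero_iff.mpr h'] at hv
    refine ⟨h, ?_⟩
    rw [if_neg (not_le.mpr h')]; linarith
  · simp only [fires_eq_zero_iff.mpr h, fires_of_le h'] at hv
    refine ⟨h, ?_⟩
    rw [if_pos h']; linarith [hlt h']
  · simp only [fires_of_le h, fires_eq_zero_iff.mpr h'] at hv
    linarith
  · simp only [fires_of_le h, fires_of_le h'] at hv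
    linarith [hlt h']

theorem injOn_prevMax (hS : IsBalanced n S)
    (hmax : heightMax (shareMap n S) = heightMax S + heightDrift S) :
    Set.InjOn (prevMax S) (heightArgmax (shareMap n S)) :=
  (leftInvOn_nextMax_prevMax S).injOn.mono fun _ hv => (lt_two_and_prevMax_mem hS hmax hv).1

theorem card_heightArgmax_shareMap_le (hS : IsBalanced n S)
    (hmax : heightMax (shareMap n S) = heightMax S + heightDrift S) :
    #(heightArgmax (shareMap n S)) ≤ #(heightArgmax S) :=
  card_le_card_of_injOn (prevMax S) (fun _ hv => (lt_two_and_prevMax_mem hS hmax hv).2)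
    (injOn_prevMax hS hmax)

theorem nextMax_mem_heightArgmax (hS : IsBalanced n S)
    (hmax : heightMax (shareMap n S) = heightMax S + heightDrift S)
    (hcard : #(heightArgmax S) ≤ #(heightArgmax (shareMap n S))) {x : ZMod n}
    (hx : x ∈ heightArgmax S) : nextMax S x ∈ heightArgmax (shareMap n S) := by
  have himage : (heightArgmax (shareMap n S)).image (prevMax S) = heightArgmax S := by
    refine eq_of_subset_of_card_le ?_ (by rwa [card_image_of_injOn (injOn_prevMax hS hmax)])
    intro x hx'
    obtain ⟨v, hv, rfl⟩ := mem_image.mp hx'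
    exact (lt_two_and_prevMax_mem hS hmax hv).2
  rw [← himage] at hx
  obtain ⟨v, hv, rfl⟩ := mem_image.mp hx
  rwa [leftInvOn_nextMax_prevMax S (lt_two_and_prevMax_mem hS hmax hv).1]

theorem height_add_height_reflect (hS : IsBalanced n S) {u : ZMod n}
    (hsym : ∀ v, S (2 * u + 1 - v) = S v) (v w : ZMod n) :
    height S v + height S (2 * u - v) = height S w + height S (2 * u - w) := by
  refine ZMod.eq_of_periodic_one (g := fun v => height S v + height S (2 * u - v)) (fun v => ?_) v w
  have h1 := height_sub_height_sub_one hS (v + 1)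
  have h2 := height_sub_height_sub_one hS (2 * u - v)
  have hmirror := hsym (v + 1)
  rw [show 2 * u + 1 - (v + 1) = 2 * u - v by ring] at hmirror
  rw [add_sub_cancel_right] at h1
  rw [hmirror, show 2 * u - v - 1 = 2 * u - (v + 1) by ring] at h2
  linarith

theorem height_reflect_eq_heightMin (hS : IsBalanced n S) {u : ZMod n}
    (hsym : ∀ v, S (2 * u + 1 - v) = S v) {x : ZMod n} (hx : x ∈ heightArgmax S) :
    height S (2 * u - x) = heightMin S := by
  refine le_antisymm (le_inf' _ _ fun w _ => ?_) (heightMin_le_height S _)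
  have h := height_add_height_reflect hS hsym x (2 * u - w)
  rw [sub_sub_cancel] at h
  have := height_le_heightMax S (2 * u - w)
  rw [mem_heightArgmax] at hx
  linarith

end Height

section FiringCount

variable {S : ZMod n → ℕ} {p : ℕ}

def firingCount (S : ZMod n → ℕ) (p : ℕ) (v : ZMod n) : ℤ :=
  ∑ t ∈ range p, fires ((shareMap n)^[t] S) v

theorem two_mul_firingCount (hS : IsPeriodicPt (shareMap n) p S) (v : ZMod n) :
    2 * firingCount S p v = firingCount S p (v - 1) + firingCount S p (v + 1) := by
  have htel := sum_range_sub (fun t => ((shareMap n)^[t] S v : ℤ)) p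
  simp only [iterate_succ_apply', cast_shareMap_apply, hS.eq, iterate_zero_apply, sub_self] at htel
  simp only [firingCount, mul_sum, ← sum_add_distrib]
  rw [← sub_eq_zero, ← sum_sub_distrib, ← neg_eq_zero, ← sum_neg_distrib, ← htel]
  exact sum_congr rfl fun t _ => by ring

theorem eq_one_of_firingCount_eq_zero [NeZero n] (hp : 0 < p)
    (hS : IsPeriodicPt (shareMap n) p S) (hbal : IsBalanced n S) {v : ZMod n}
    (hv : firingCount S p v = 0) (w : ZMod n) : S w = 1 := by
  have hle : ∀ w, S w ≤ 1 := fun w => by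
    have hw : firingCount S p w = 0 :=
      (ZMod.eq_of_two_mul_eq_add (two_mul_firingCount hS) w v).trans hv
    have := (sum_eq_zero_iff_of_nonneg fun t _ => fires_nonneg _ w).mp hw 0 (mem_range.mpr hp)
    rw [iterate_zero_apply, fires_eq_zero_iff] at this
    omega
  have hsum : ∑ w, S w = ∑ _w : ZMod n, 1 := by rw [hbal]; simp
  exact (sum_eq_sum_iff_of_le fun w _ => hle w).mp hsum w (mem_univ w)

end FiringCount

section PeriodicOrbit

variable [NeZero n] {S : ZMod n → ℕ} {p : ℕ}

theorem heightSpread_iterate (hp : 0 < p) (hS : IsPeriodicPt (shareMap n) p S)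
    (hbal : IsBalanced n S) (m : ℕ) : heightSpread ((shareMap n)^[m] S) = heightSpread S :=
  hS.eq_of_antitone hp heightSpread (fun m => by
    rw [iterate_succ_apply']; exact heightSpread_shareMap_le (hbal.iterate m)) m

theorem heightMax_shareMap_iterate (hp : 0 < p) (hS : IsPeriodicPt (shareMap n) p S)
    (hbal : IsBalanced n S) (m : ℕ) :
    heightMax (shareMap n ((shareMap n)^[m] S))
      = heightMax ((shareMap n)^[m] S) + heightDrift ((shareMap n)^[m] S) := by
  have hle := heightMax_shareMap_le (hbal.iterate m)
  have hge := heightMin_shareMap_ge (hbal.iterate m)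
  have hspread := heightSpread_iterate hp hS hbal (m + 1)
  rw [iterate_succ_apply', ← heightSpread_iterate hp hS hbal m] at hspread
  unfold heightSpread at hspread
  linarith

theorem card_heightArgmax_iterate (hp : 0 < p) (hS : IsPeriodicPt (shareMap n) p S)
    (hbal : IsBalanced n S) (m : ℕ) :
    #(heightArgmax ((shareMap n)^[m] S)) = #(heightArgmax S) :=
  hS.eq_of_antitone hp (fun T => #(heightArgmax T)) (fun m => by
    rw [iterate_succ_apply']
    exact card_heightArgmax_shareMap_le (hbal.iterate m)
      (heightMax_shareMap_iterate hp hS hbal m)) m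

def maxTrack (S : ZMod n → ℕ) (x₀ : ZMod n) : ℕ → ZMod n
  | 0 => x₀
  | t + 1 => nextMax ((shareMap n)^[t] S) (maxTrack S x₀ t)

theorem maxTrack_mem (hp : 0 < p) (hS : IsPeriodicPt (shareMap n) p S) (hbal : IsBalanced n S)
    {x₀ : ZMod n} (hx₀ : x₀ ∈ heightArgmax S) (t : ℕ) :
    maxTrack S x₀ t ∈ heightArgmax ((shareMap n)^[t] S) := by
  induction t with
  | zero => exact hx₀
  | succ t ih =>
    rw [iterate_succ_apply']
    refine nextMax_mem_heightArgmax (hbal.iterate t) (heightMax_shareMap_iterate hp hS hbal t) ?_ ih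
    rw [card_heightArgmax_iterate hp hS hbal, ← iterate_succ_apply' (shareMap n) t S,
      card_heightArgmax_iterate hp hS hbal]

theorem maxTrack_ne (hp : 0 < p) (hS : IsPeriodicPt (shareMap n) p S) (hbal : IsBalanced n S)
    {u : ZMod n} (hsym : ∀ v, S (2 * u + 1 - v) = S v) (hspread : heightSpread S ≠ 0)
    {x₀ : ZMod n} (hx₀ : x₀ ∈ heightArgmax S) (t : ℕ) : maxTrack S x₀ t ≠ u := by
  intro htu
  have hmem := maxTrack_mem hp hS hbal hx₀ t
  have hmin := height_reflect_eq_heightMin (hbal.iterate t) (iterate_shareMap_apply_sub hsym t) hmem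
  rw [htu, show 2 * u - u = u by ring] at hmin
  rw [htu, mem_heightArgmax] at hmem
  rw [← heightSpread_iterate hp hS hbal t, heightSpread, ← hmem, ← hmin, sub_self] at hspread
  exact hspread rfl

theorem exists_forall_iterate_lt_two (hp : 0 < p) (hS : IsPeriodicPt (shareMap n) p S)
    (hbal : IsBalanced n S) {u : ZMod n} (hsym : ∀ v, S (2 * u + 1 - v) = S v)
    (hspread : heightSpread S ≠ 0) : ∃ T w, ∀ s, (shareMap n)^[T + s] S w < 2 := by
  obtain ⟨x₀, hx₀⟩ := heightArgmax_nonempty S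
  set x := maxTrack S x₀
  -- `d t` is the distance from the centre `u` forward to the tracked maximum: it drops exactly
  -- when that maximum fires, and it never reaches `0`.
  set d : ℕ → ℕ := fun t => (x t - u).val
  have hd (t : ℕ) :
      d (t + 1) ≤ d t ∧ (2 ≤ (shareMap n)^[t] S (x t) → d (t + 1) < d t) := by
    have hne : x t - u ≠ 0 := sub_ne_zero.mpr (maxTrack_ne hp hS hbal hsym hspread hx₀ t)
    have hlt := ZMod.val_sub_one_add_one hne
    simp only [d, x, maxTrack, nextMax] at hlt ⊢
    split_ifs with h
    · rw [sub_right_comm]; omega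
    · exact ⟨le_rfl, fun h' => absurd h' h⟩
  set T := argmin d
  have hconst (s : ℕ) : d (T + s) = d T :=
    le_antisymm (antitone_nat_of_succ_le (fun t => (hd t).1) (Nat.le_add_right T s)) (argmin_le d _)
  have hquiet (s : ℕ) : (shareMap n)^[T + s] S (x (T + s)) < 2 :=
    not_le.mp fun h => ((hd (T + s)).2 h).ne (by rw [add_assoc, hconst, hconst])
  have hstay (s : ℕ) : x (T + s) = x T := by
    induction s with
    | zero => rfl
    | succ s ih =>
      rw [← add_assoc]
      simp only [x, maxTrack, nextMax, if_neg (not_le.mpr (hquiet s))]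
      exact ih
  exact ⟨T, x T, fun s => hstay s ▸ hquiet s⟩

theorem eq_one_of_isPeriodicPt_of_reflect (hp : 0 < p) (hS : IsPeriodicPt (shareMap n) p S)
    (hbal : IsBalanced n S) {u : ZMod n} (hsym : ∀ v, S (2 * u + 1 - v) = S v) :
    S = fun _ => 1 := by
  by_cases hspread : heightSpread S = 0
  · exact funext (eq_one_of_heightSpread_eq_zero hbal hspread)
  obtain ⟨T, w, hquiet⟩ := exists_forall_iterate_lt_two hp hS hbal hsym hspread
  have hcount : firingCount ((shareMap n)^[T] S) p w = 0 := sum_eq_zero fun s _ => by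
    rw [← iterate_add_apply, add_comm, fires_eq_zero_iff]
    exact hquiet s
  have hone : (shareMap n)^[T] S = (shareMap n)^[T] fun _ => 1 := by
    rw [iterate_fixed shareMap_one]
    exact funext (eq_one_of_firingCount_eq_zero hp (hS.apply_iterate T) (hbal.iterate T) hcount)
  exact (hS.iterate T).eq_of_apply_eq_same
    ((IsFixedPt.isPeriodicPt shareMap_one p).iterate T) hp hone

end PeriodicOrbit

section Monopoly

variable {M : ZMod n → ℕ} {a : ZMod n}

theorem monopoly_reflect (hM0 : ∀ i, i ≠ a → M i = 0) (v : ZMod n) : M (2 * a - v) = M v := by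
  by_cases hv : v = a
  · rw [hv, two_mul, add_sub_cancel_right]
  · rw [hM0 v hv, hM0 _ fun h => hv (by linear_combination -h)]

variable [NeZero n]

theorem isBalanced_monopoly (hMa : M a = n) (hM0 : ∀ i, i ≠ a → M i = 0) :
    IsBalanced n M := by
  rw [IsBalanced, sum_eq_single a (fun i _ hi => hM0 i hi) (by simp), hMa]

theorem moment_monopoly (hMa : M a = n) (hM0 : ∀ i, i ≠ a → M i = 0) : moment M = 0 := by
  rw [moment, sum_eq_single a (fun i _ hi => by simp [hM0 i hi]) (by simp), hMa,
    ZMod.natCast_self, mul_zero]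

end Monopoly

end CandySharing

open CandySharing

/-- Monopoly states are ultimately equitable if and only if the number of children is
odd. -/
theorem monopoly_equitable_iff_odd (n : ℕ) (hn : 3 ≤ n) (a : ZMod n)
    (M : ZMod n → ℕ) (hMa : M a = n) (hM0 : ∀ i : ZMod n, i ≠ a → M i = 0)
    (k : ℕ) (hper : IsPeriodicState n ((shareMap n)^[k] M)) :
    (∃ m : ℕ, ∀ i : ZMod n, (shareMap n)^[m] M i = 1) ↔ Odd n := by
  have : NeZero n := ⟨by omega⟩
  constructor
  · rintro ⟨m, hm⟩
    rw [← Nat.not_even_iff_odd]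
    intro heven
    have hmoment := moment_iterate M m
    rw [funext hm, moment_monopoly hMa hM0] at hmoment
    exact ZMod.sum_univ_ne_zero_of_even heven (by simpa [moment] using hmoment)
  · rintro ⟨l, rfl⟩
    obtain ⟨p, hp, hperiodic⟩ := hper
    have hcentre : 2 * (a + l) + 1 = 2 * a := by
      rw [mul_add, add_assoc]
      norm_cast
      rw [ZMod.natCast_self, add_zero]
    refine ⟨k, congrFun (eq_one_of_isPeriodicPt_of_reflect hp hperiodic
      ((isBalanced_monopoly hMa hM0).iterate k) (u := a + l) fun v => ?_)⟩
    rw [hcentre]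
    exact iterate_shareMap_apply_sub (monopoly_reflect hM0) k v
end

section
/- Periodic states are bounded by 2: if S is a balanced periodic state of the balanced candy sharing game with n children, then S i ≤ 2 for every i ∈ ZMod n. -/
theorem Function.IsPeriodicPt.lyapunov_eq {α β : Type*} [PartialOrder β] {f : α → α}
    {s : Set α} {L : α → β} (hf : Set.MapsTo f s s) (hL : ∀ x ∈ s, L (f x) ≤ L x) {k : ℕ}
    (hk : 0 < k) {x : α} (hx : Function.IsPeriodicPt f k x) (hxs : x ∈ s) :
    L (f x) = L x := by
  have hanti : Antitone fun t => L (f^[t] x) := antitone_nat_of_succ_le fun t => by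
    simpa only [Function.iterate_succ_apply'] using hL _ (hf.iterate t hxs)
  refine le_antisymm (hL x hxs) ?_
  simpa only [hx.eq, Function.iterate_one] using hanti (Nat.one_le_iff_ne_zero.mpr hk.ne')

theorem ZMod.exists_forall_add_one_eq_of_sum_eq_zero {n : ℕ} [NeZero n] {G : Type*}
    [AddCommGroup G] {g : ZMod n → G} (hg : ∑ i, g i = 0) :
    ∃ V : ZMod n → G, ∀ m, V (m + 1) = V m + g m := by
  refine ⟨fun m => ∑ j ∈ Finset.range m.val, g j, fun m => ?_⟩
  have hm := ZMod.val_lt m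
  rcases (m.val + 1).lt_or_ge n with h | h
  · have : Fact (1 < n) := ⟨by omega⟩
    have hval : (m + 1).val = m.val + 1 := by
      rw [ZMod.val_add, ZMod.val_one, Nat.mod_eq_of_lt h]
    simp only [hval, Finset.sum_range_succ, ZMod.natCast_zmod_val]
  · have hval : m.val + 1 = n := by omega
    have hm1 : m + 1 = 0 := by
      rw [← ZMod.natCast_zmod_val m, ← Nat.cast_add_one, hval, ZMod.natCast_self]
    have hsum : ∑ j ∈ Finset.range n, g j = ∑ i, g i :=
      Finset.sum_nbij' (fun j => (j : ZMod n)) ZMod.val (by simp) (by simp [ZMod.val_lt])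
        (fun _ hj => by simp_all [Nat.mod_eq_of_lt]) (by simp) (by simp)
    simp only [hm1, ZMod.val_zero, Finset.sum_range_zero]
    rw [← ZMod.natCast_zmod_val m, ZMod.val_natCast_of_lt hm, ← Finset.sum_range_succ, hval,
      hsum, hg]

theorem Fintype.sum_comp_sub_right {ι M : Type*} [AddGroup ι] [Fintype ι] [AddCommMonoid M]
    (g : ι → M) (c : ι) : ∑ i, g (i - c) = ∑ i, g i :=
  Fintype.sum_equiv (Equiv.subRight c) _ _ fun _ => rfl

namespace CandySharing

variable {n : ℕ}

def firing (T : ZMod n → ℕ) (i : ZMod n) : ℤ := if 2 ≤ T i then 1 else 0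

def IsPotential (T : ZMod n → ℕ) (V : ZMod n → ℤ) : Prop := ∀ m, V (m + 1) = V m + 1 - T m

-- Sharing at `j` moves one unit of potential from `j` to `j + 1`.
def potentialStep (T : ZMod n → ℕ) (V : ZMod n → ℤ) (m : ZMod n) : ℤ :=
  V m + firing T (m - 1) - firing T m

def energy [NeZero n] (V : ZMod n → ℤ) : ℤ := ∑ m, V m ^ 2

def shareWithPotential (n : ℕ) (p : (ZMod n → ℕ) × (ZMod n → ℤ)) :
    (ZMod n → ℕ) × (ZMod n → ℤ) :=
  (shareMap n p.1, potentialStep p.1 p.2)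

theorem shareMap_eq (T : ZMod n → ℕ) (i : ZMod n) :
    (shareMap n T i : ℤ) = T i - 2 * firing T i + firing T (i - 1) + firing T (i + 1) := by
  unfold shareMap firing
  split_ifs <;> push_cast <;> omega

theorem firing_mul_sub_two_nonneg (T : ZMod n → ℕ) (i : ZMod n) :
    0 ≤ firing T i * (T i - 2) := by
  unfold firing
  split_ifs with h
  · simpa using h
  · simp

theorem firing_sq (T : ZMod n → ℕ) (i : ZMod n) : firing T i ^ 2 = firing T i := by
  unfold firing; split_ifs <;> norm_num

theorem firing_nonneg (T : ZMod n → ℕ) (i : ZMod n) : 0 ≤ firing T i := by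
  unfold firing; split_ifs <;> norm_num

theorem IsPotential.potentialStep {T : ZMod n → ℕ} {V : ZMod n → ℤ} (hV : IsPotential T V) :
    IsPotential (shareMap n T) (potentialStep T V) := fun m => by
  simp only [CandySharing.potentialStep, add_sub_cancel_right, shareMap_eq, hV m]
  ring

theorem shareWithPotential_iterate_fst (t : ℕ) (p : (ZMod n → ℕ) × (ZMod n → ℤ)) :
    ((shareWithPotential n)^[t] p).1 = (shareMap n)^[t] p.1 :=
  Function.Semiconj.iterate_right (f := Prod.fst) (gb := shareMap n) (fun _ => rfl) t p

variable [NeZero n]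

theorem IsPotential.eq_of_sum_eq {T : ZMod n → ℕ} {V W : ZMod n → ℤ} (hV : IsPotential T V)
    (hW : IsPotential T W) (hsum : ∑ m, V m = ∑ m, W m) : V = W := by
  have hper : Function.Periodic (fun m => W m - V m) 1 := fun m => by
    simp only [hV m, hW m]; ring
  have hconst : ∀ m, W m = V m + (W 0 - V 0) := fun m => by
    have := hper.nat_mul_eq m.val
    simp only [mul_one, ZMod.natCast_zmod_val] at this
    linarith
  have hn : (n : ℤ) * (W 0 - V 0) = 0 := by
    rw [Finset.sum_congr rfl fun m _ => hconst m, Finset.sum_add_distrib, Finset.sum_const,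
      Finset.card_univ, ZMod.card, nsmul_eq_mul] at hsum
    linarith
  have hc : W 0 - V 0 = 0 := (mul_eq_zero.mp hn).resolve_left (by exact_mod_cast NeZero.ne n)
  funext m
  rw [hconst m, hc, add_zero]

theorem exists_isPotential {T : ZMod n → ℕ} (hT : IsBalanced n T) : ∃ V, IsPotential T V := by
  obtain ⟨V, hV⟩ := ZMod.exists_forall_add_one_eq_of_sum_eq_zero (g := fun m => 1 - (T m : ℤ))
    (by simp [Finset.sum_sub_distrib, ← Nat.cast_sum, hT.symm, ZMod.card])
  exact ⟨V, fun m => by rw [hV m]; ring⟩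

theorem sum_potentialStep (T : ZMod n → ℕ) (V : ZMod n → ℤ) :
    ∑ m, potentialStep T V m = ∑ m, V m := by
  simp only [CandySharing.potentialStep, Finset.sum_sub_distrib, Finset.sum_add_distrib,
    Fintype.sum_comp_sub_right (firing T) 1]
  ring

theorem energy_potentialStep {T : ZMod n → ℕ} {V : ZMod n → ℤ} (hV : IsPotential T V) :
    energy (potentialStep T V) + 2 * ∑ m, firing T m * (T m - 2)
      + 2 * ∑ m, firing T (m - 1) * firing T m = energy V := by
  set g : ZMod n → ℤ := fun j => firing T j * (2 * V j + 3 - 2 * T j)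
  -- `g j` collects the terms belonging to position `j` once `V (m - 1) + 1 - T (m - 1) = V m`
  -- is used, so that the sum telescopes.
  have key : ∀ m, (V m + firing T (m - 1) - firing T m) ^ 2 + 2 * (firing T m * (T m - 2))
      + 2 * (firing T (m - 1) * firing T m) = V m ^ 2 + g (m - 1) - g m := fun m => by
    have hVm := hV (m - 1)
    rw [sub_add_cancel] at hVm
    linear_combination firing_sq T (m - 1) + firing_sq T m + 2 * firing T (m - 1) * hVm
  simp only [energy, CandySharing.potentialStep, Finset.mul_sum, ← Finset.sum_add_distrib, key]
  rw [Finset.sum_sub_distrib, Finset.sum_add_distrib, Fintype.sum_comp_sub_right g 1,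
    add_sub_cancel_right]

theorem energy_potentialStep_le {T : ZMod n → ℕ} {V : ZMod n → ℤ} (hV : IsPotential T V) :
    energy (potentialStep T V) ≤ energy V := by
  have h1 := Finset.sum_nonneg fun m (_ : m ∈ Finset.univ) => firing_mul_sub_two_nonneg T m
  have h2 := Finset.sum_nonneg fun m (_ : m ∈ Finset.univ) =>
    mul_nonneg (firing_nonneg T (m - 1)) (firing_nonneg T m)
  linarith [energy_potentialStep hV]

theorem energy_potentialStep_lt {T : ZMod n → ℕ} {V : ZMod n → ℤ} (hV : IsPotential T V)
    {i : ZMod n} (hi : 2 < T i) : energy (potentialStep T V) < energy V := by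
  have h1 : firing T i * (T i - 2) ≤ ∑ m, firing T m * (T m - 2) :=
    Finset.single_le_sum (fun m _ => firing_mul_sub_two_nonneg T m) (Finset.mem_univ i)
  have h2 := Finset.sum_nonneg fun m (_ : m ∈ Finset.univ) =>
    mul_nonneg (firing_nonneg T (m - 1)) (firing_nonneg T m)
  have h3 : firing T i * (T i - 2) = T i - 2 := by simp [firing, hi.le]
  have h4 : (2 : ℤ) < T i := by exact_mod_cast hi
  linarith [energy_potentialStep hV]

theorem sum_shareWithPotential_iterate_snd (t : ℕ) (p : (ZMod n → ℕ) × (ZMod n → ℤ)) :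
    ∑ m, ((shareWithPotential n)^[t] p).2 m = ∑ m, p.2 m := by
  induction t generalizing p with
  | zero => rfl
  | succ t ih => rw [Function.iterate_succ_apply, ih]; exact sum_potentialStep _ _

end CandySharing

open CandySharing in
theorem periodic_le_two_general (n : ℕ) [NeZero n] (S : ZMod n → ℕ)
    (hbal : IsBalanced n S) (hper : IsPeriodicState n S) :
    ∀ i : ZMod n, S i ≤ 2 := by
  intro i
  by_contra! hi
  obtain ⟨k, hk, hSk⟩ := hper
  obtain ⟨V, hV⟩ := exists_isPotential hbal
  have hmaps : Set.MapsTo (shareWithPotential n) {p | IsPotential p.1 p.2}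
      {p | IsPotential p.1 p.2} := fun _ hp => hp.potentialStep
  have hfst : ((shareWithPotential n)^[k] (S, V)).1 = S := by
    rw [shareWithPotential_iterate_fst]; exact hSk
  have hpot := hmaps.iterate k (x := (S, V)) hV
  rw [Set.mem_ofPred_eq, hfst] at hpot
  have hperiodic : Function.IsPeriodicPt (shareWithPotential n) k (S, V) :=
    Prod.ext hfst (hpot.eq_of_sum_eq hV (sum_shareWithPotential_iterate_snd k (S, V)))
  exact (energy_potentialStep_lt hV hi).ne
    (hperiodic.lyapunov_eq (L := fun p => energy p.2) hmaps
      (fun _ hp => energy_potentialStep_le hp) hk hV)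

/-- Periodic balanced states are bounded by 2. -/
theorem periodic_le_two (n : ℕ) (hn : 3 ≤ n) [NeZero n] (S : ZMod n → ℕ)
    (hbal : IsBalanced n S) (hper : IsPeriodicState n S) :
    ∀ i : ZMod n, S i ≤ 2 :=
  periodic_le_two_general n S hbal hper
end
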